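/- arXiv:2203.00788 — 5 statements merged into one kernel-verified Lean document; each statement's English description precedes it below -/
import Mathlib

section
/- Let Ω ⊆ ℝ² be open, μ, λ ∈ ℝ, let u : ℝ² → ℝ² be twice continuously differentiable on Ω and p : ℝ² → ℝ continuously differentiable on Ω, and suppose that on Ω the Stokes eigenvalue equations hold: −μ(Δu₁,Δu₂) + ∇p = λu and div(u) = 0. Define the stress σ := μ·underline_curl(u) − p·J. Then on Ω: curl(σ) = −λu, σ^r = μ·underline_curl(u), and p = −(1/2)(σ:J). -/
/-! The stress is built so that its `J`-component carries the pressure: `σ : J = μ div u − 2p`,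
which gives the last two identities once `div u = 0`. Row by row, `curl ∘ underline_curl` is the
Laplacian and `curl (p J) = ∇p`, so `curl σ = μ Δu − ∇p`, which is `−λu` by the momentum
equation. -/

/-- The matrix `J` with rows `(0, 1)` and `(-1, 0)`. -/
def J : Matrix (Fin 2) (Fin 2) ℝ := !![0, 1; -1, 0]

/-- The Frobenius inner product `τ : σ = ∑ i j, τ i j * σ i j` of 2×2 real matrices. -/
def frob (τ σ : Matrix (Fin 2) (Fin 2) ℝ) : ℝ := ∑ i, ∑ j, τ i j * σ i j

/-- `τ^r := τ − (1/2)(τ:J)·J`. -/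
noncomputable def taur (τ : Matrix (Fin 2) (Fin 2) ℝ) : Matrix (Fin 2) (Fin 2) ℝ :=
  τ - ((1 / 2) * frob τ J) • J

/-- Partial derivative `∂f/∂x_j` at `x` of a scalar field on `ℝ²`. -/
noncomputable def pd (f : (Fin 2 → ℝ) → ℝ) (x : Fin 2 → ℝ) (j : Fin 2) : ℝ :=
  fderiv ℝ f x (Pi.single j 1)

/-- `underline_curl(u)`: the 2×2 matrix field whose `i`-th row is `(−∂uᵢ/∂x₂, ∂uᵢ/∂x₁)`. -/
noncomputable def ucurl (u : (Fin 2 → ℝ) → (Fin 2 → ℝ)) (x : Fin 2 → ℝ) :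
    Matrix (Fin 2) (Fin 2) ℝ :=
  !![-pd (fun y => u y 0) x 1, pd (fun y => u y 0) x 0;
     -pd (fun y => u y 1) x 1, pd (fun y => u y 1) x 0]

/-- `curl(τ) := (∂τ₁₂/∂x₁ − ∂τ₁₁/∂x₂, ∂τ₂₂/∂x₁ − ∂τ₂₁/∂x₂)` of a 2×2 matrix field. -/
noncomputable def mcurl (τ : (Fin 2 → ℝ) → Matrix (Fin 2) (Fin 2) ℝ) (x : Fin 2 → ℝ) :
    Fin 2 → ℝ :=
  ![pd (fun y => τ y 0 1) x 0 - pd (fun y => τ y 0 0) x 1,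
    pd (fun y => τ y 1 1) x 0 - pd (fun y => τ y 1 0) x 1]

/-- `div(u) := ∂u₁/∂x₁ + ∂u₂/∂x₂`. -/
noncomputable def divg (u : (Fin 2 → ℝ) → (Fin 2 → ℝ)) (x : Fin 2 → ℝ) : ℝ :=
  pd (fun y => u y 0) x 0 + pd (fun y => u y 1) x 1

/-- The Laplacian `Δf := ∂²f/∂x₁² + ∂²f/∂x₂²` of a scalar field on `ℝ²`. -/
noncomputable def lap (f : (Fin 2 → ℝ) → ℝ) (x : Fin 2 → ℝ) : ℝ :=
  pd (fun y => pd f y 0) x 0 + pd (fun y => pd f y 1) x 1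

section PartialDerivative

variable {f g : (Fin 2 → ℝ) → ℝ} {x : Fin 2 → ℝ}

lemma pd_const (c : ℝ) (x : Fin 2 → ℝ) (j : Fin 2) : pd (fun _ => c) x j = 0 := by
  simp [pd]

lemma pd_const_mul (c : ℝ) (f : (Fin 2 → ℝ) → ℝ) (x : Fin 2 → ℝ) (j : Fin 2) :
    pd (fun y => c * f y) x j = c * pd f x j := by
  simp only [pd]
  rw [show (fun y => c * f y) = c • f from rfl, fderiv_const_smul_field]
  rfl

lemma pd_neg (f : (Fin 2 → ℝ) → ℝ) (x : Fin 2 → ℝ) (j : Fin 2) :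
    pd (fun y => -f y) x j = -pd f x j := by
  simp [pd, fderiv_fun_neg]

lemma pd_sub (hf : DifferentiableAt ℝ f x) (hg : DifferentiableAt ℝ g x) (j : Fin 2) :
    pd (fun y => f y - g y) x j = pd f x j - pd g x j := by
  simp [pd, fderiv_fun_sub hf hg]

lemma ContDiffAt.differentiableAt_pd (hf : ContDiffAt ℝ 2 f x) (j : Fin 2) :
    DifferentiableAt ℝ (fun y => pd f y j) x :=
  ((hf.fderiv_right (by norm_num)).differentiableAt one_ne_zero).clm_apply
    (differentiableAt_const _)

end PartialDerivative

section MatrixCurl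

variable {A B : (Fin 2 → ℝ) → Matrix (Fin 2) (Fin 2) ℝ} {x : Fin 2 → ℝ}

lemma mcurl_sub (hA : ∀ i j, DifferentiableAt ℝ (fun y => A y i j) x)
    (hB : ∀ i j, DifferentiableAt ℝ (fun y => B y i j) x) :
    mcurl (fun y => A y - B y) x = mcurl A x - mcurl B x := by
  ext i
  fin_cases i <;>
    simp [mcurl, Matrix.sub_apply, pd_sub (hA _ _) (hB _ _)] <;> ring

lemma mcurl_const_smul (c : ℝ) (A : (Fin 2 → ℝ) → Matrix (Fin 2) (Fin 2) ℝ) (x : Fin 2 → ℝ) :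
    mcurl (fun y => c • A y) x = c • mcurl A x := by
  ext i
  fin_cases i <;> simp [mcurl, pd_const_mul] <;> ring

lemma mcurl_ucurl (u : (Fin 2 → ℝ) → (Fin 2 → ℝ)) (x : Fin 2 → ℝ) :
    mcurl (ucurl u) x = fun i => lap (fun y => u y i) x := by
  ext i
  fin_cases i <;> simp [mcurl, ucurl, lap, pd_neg]

lemma mcurl_smul_J (f : (Fin 2 → ℝ) → ℝ) (x : Fin 2 → ℝ) :
    mcurl (fun y => f y • J) x = fun i => pd f x i := by
  ext i
  fin_cases i <;> simp [mcurl, J, pd_neg, pd_const]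

lemma differentiableAt_ucurl_apply {u : (Fin 2 → ℝ) → (Fin 2 → ℝ)} (hu : ContDiffAt ℝ 2 u x)
    (i j : Fin 2) : DifferentiableAt ℝ (fun y => ucurl u y i j) x := by
  have hpd (k l : Fin 2) : DifferentiableAt ℝ (fun y => pd (fun z => u z k) y l) x :=
    (contDiffAt_pi.1 hu k).differentiableAt_pd l
  fin_cases i <;> fin_cases j <;> simp [ucurl, hpd]

end MatrixCurl

lemma frob_J (τ : Matrix (Fin 2) (Fin 2) ℝ) : frob τ J = τ 0 1 - τ 1 0 := by
  simp [frob, J, Fin.sum_univ_two]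
  ring

lemma frob_smul_J (c : ℝ) (τ : Matrix (Fin 2) (Fin 2) ℝ) : frob (c • τ) J = c * frob τ J := by
  rw [frob_J, frob_J, Matrix.smul_apply, Matrix.smul_apply, smul_eq_mul, smul_eq_mul, mul_sub]

lemma taur_sub_smul_J (τ : Matrix (Fin 2) (Fin 2) ℝ) (c : ℝ) : taur (τ - c • J) = taur τ := by
  simp only [taur, frob_J]
  ext i j
  fin_cases i <;> fin_cases j <;> simp [J] <;> ring

lemma taur_eq_self_of_frob_J_eq_zero {τ : Matrix (Fin 2) (Fin 2) ℝ} (h : frob τ J = 0) :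
    taur τ = τ := by
  simp [taur, h]

lemma frob_ucurl_J (u : (Fin 2 → ℝ) → (Fin 2 → ℝ)) (x : Fin 2 → ℝ) :
    frob (ucurl u x) J = divg u x := by
  simp [frob_J, ucurl, divg]

section Stress

noncomputable def stress (μ : ℝ) (u : (Fin 2 → ℝ) → (Fin 2 → ℝ)) (p : (Fin 2 → ℝ) → ℝ)
    (x : Fin 2 → ℝ) : Matrix (Fin 2) (Fin 2) ℝ :=
  μ • ucurl u x - p x • J

variable (μ : ℝ) {u : (Fin 2 → ℝ) → (Fin 2 → ℝ)} {p : (Fin 2 → ℝ) → ℝ} {x : Fin 2 → ℝ}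

lemma frob_stress_J : frob (stress μ u p x) J = μ * divg u x - 2 * p x := by
  rw [frob_J]
  simp [stress, ucurl, divg, J]
  ring

lemma taur_stress (hdiv : divg u x = 0) : taur (stress μ u p x) = μ • ucurl u x := by
  refine (taur_sub_smul_J _ _).trans (taur_eq_self_of_frob_J_eq_zero ?_)
  rw [frob_smul_J, frob_ucurl_J, hdiv, mul_zero]

lemma mcurl_stress (hu : ContDiffAt ℝ 2 u x) (hp : DifferentiableAt ℝ p x) :
    mcurl (stress μ u p) x = fun i => μ * lap (fun y => u y i) x - pd p x i := by
  have hμA (i j : Fin 2) : DifferentiableAt ℝ (fun y => (μ • ucurl u y) i j) x := by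
    simpa using (differentiableAt_ucurl_apply hu i j).const_mul μ
  have hpJ (i j : Fin 2) : DifferentiableAt ℝ (fun y => (p y • J) i j) x := by
    simpa using hp.mul_const (J i j)
  change mcurl (fun y => μ • ucurl u y - p y • J) x = _
  rw [mcurl_sub hμA hpJ, mcurl_const_smul, mcurl_ucurl, mcurl_smul_J]
  rfl

end Stress

/-- If `(u, p, λ)` solves the Stokes eigenvalue problem `−μΔu + ∇p = λu`, `div u = 0` on an
open set `Ω`, then the stress `σ := μ·underline_curl(u) − p·J` satisfies, on `Ω`,
`curl(σ) = −λu`, `σ^r = μ·underline_curl(u)` and `p = −(1/2)(σ:J)`. -/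
theorem stokes_to_stress_velocity (Ω : Set (Fin 2 → ℝ)) (hΩ : IsOpen Ω) (μ lam : ℝ)
    (u : (Fin 2 → ℝ) → (Fin 2 → ℝ)) (p : (Fin 2 → ℝ) → ℝ)
    (hu : ContDiffOn ℝ 2 u Ω) (hp : ContDiffOn ℝ 1 p Ω)
    (hmom : ∀ x ∈ Ω, (fun i => -μ * lap (fun y => u y i) x + pd p x i) =
      fun i => lam * u x i)
    (hdiv : ∀ x ∈ Ω, divg u x = 0)
    (σ : (Fin 2 → ℝ) → Matrix (Fin 2) (Fin 2) ℝ)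
    (hσ : ∀ x, σ x = μ • ucurl u x - p x • J) :
    ∀ x ∈ Ω, mcurl σ x = (fun i => -lam * u x i) ∧
      taur (σ x) = μ • ucurl u x ∧
      p x = -(1 / 2) * frob (σ x) J := by
  obtain rfl : σ = stress μ u p := funext hσ
  intro x hx
  have hux : ContDiffAt ℝ 2 u x := hu.contDiffAt (hΩ.mem_nhds hx)
  have hpx : DifferentiableAt ℝ p x :=
    (hp.contDiffAt (hΩ.mem_nhds hx)).differentiableAt one_ne_zero
  refine ⟨?_, taur_stress μ (hdiv x hx), ?_⟩
  · ext i
    rw [mcurl_stress μ hux hpx]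
    linarith [congrFun (hmom x hx) i]
  · rw [frob_stress_J, hdiv x hx]
    ring
end

section
/- Assume a is symmetric, i.e. a(ξ,τ) = a(τ,ξ) for all ξ, τ ∈ H. Let λ, λ_h ∈ ℝ, σ, σ_h ∈ H and u, u_h ∈ Q with ‖u‖_Q = ‖u_h‖_Q = 1 satisfy: a(σ,τ) + b(τ,u) = 0 for all τ ∈ H; b(σ,v) = −λ⟨u,v⟩ for all v ∈ Q; a(σ_h,σ_h) + b(σ_h,u_h) = 0; and b(σ_h,v) = −λ_h⟨u_h,v⟩ for all v ∈ Q. Then λ − λ_h = a(σ − σ_h, σ − σ_h) − λ_h‖u − u_h‖_Q². -/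
open RealInnerProductSpace

/-- The eigenvalue error identity `λ − λ_h = a(σ − σ_h, σ − σ_h) − λ_h‖u − u_h‖²` for the
mixed eigenvalue problem with symmetric bilinear form `a`. -/
theorem eigenvalue_error_identity
    {H Q : Type*} [NormedAddCommGroup H] [InnerProductSpace ℝ H] [CompleteSpace H]
    [NormedAddCommGroup Q] [InnerProductSpace ℝ Q] [CompleteSpace Q]
    (a : H →ₗ[ℝ] H →ₗ[ℝ] ℝ) (b : H →ₗ[ℝ] Q →ₗ[ℝ] ℝ)
    (ha : ∀ ξ τ : H, a ξ τ = a τ ξ)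
    (lam lamh : ℝ) (σ σh : H) (u uh : Q)
    (hu : ‖u‖ = 1) (huh : ‖uh‖ = 1)
    (h1 : ∀ τ : H, a σ τ + b τ u = 0)
    (h2 : ∀ v : Q, b σ v = -lam * ⟪u, v⟫)
    (h1h : a σh σh + b σh uh = 0)
    (h2h : ∀ v : Q, b σh v = -lamh * ⟪uh, v⟫) :
    lam - lamh = a (σ - σh) (σ - σh) - lamh * ‖u - uh‖ ^ 2 := by
  have huu : ⟪u, u⟫ = 1 := by rw [real_inner_self_eq_norm_sq, hu]; ring
  have huhuh : ⟪uh, uh⟫ = 1 := by rw [real_inner_self_eq_norm_sq, huh]; ring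
  have e1 : a σ σ = lam := by have := h1 σ; rw [h2 u, huu] at this; linarith
  have e2 : a σ σh = lamh * ⟪uh, u⟫ := by
    have := h1 σh; rw [h2h u] at this; linarith
  have e3 : a σh σh = lamh := by
    have := h1h; rw [h2h uh, huhuh] at this; linarith
  have hn : ‖u - uh‖ ^ 2 = 2 - 2 * ⟪u, uh⟫ := by
    rw [@norm_sub_sq_real, hu, huh]; ring
  simp only [map_sub, LinearMap.sub_apply]
  rw [e1, e3, ha σh σ, e2, hn, real_inner_comm u uh]
  ring
end

section
/- Assume a is symmetric and bounded with constant C_a > 0, i.e. a(ξ,τ) = a(τ,ξ) and |a(ξ,τ)| ≤ C_a‖ξ‖_H‖τ‖_H for all ξ, τ ∈ H. Let λ, λ_h ∈ ℝ, σ, σ_h ∈ H and u, u_h ∈ Q with ‖u‖_Q = ‖u_h‖_Q = 1 satisfy: a(σ,τ) + b(τ,u) = 0 for all τ ∈ H; b(σ,v) = −λ⟨u,v⟩ for all v ∈ Q; a(σ_h,σ_h) + b(σ_h,u_h) = 0; and b(σ_h,v) = −λ_h⟨u_h,v⟩ for all v ∈ Q. Then |λ − λ_h| ≤ C_a‖σ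 − σ_h‖_H² + |λ_h|·‖u − u_h‖_Q². -/
open RealInnerProductSpace

/-- The double-order eigenvalue error bound
`|λ − λ_h| ≤ C_a‖σ − σ_h‖² + |λ_h|‖u − u_h‖²` for the mixed eigenvalue problem with a
symmetric bounded bilinear form `a`. -/
theorem eigenvalue_error_bound
    {H Q : Type*} [NormedAddCommGroup H] [InnerProductSpace ℝ H] [CompleteSpace H]
    [NormedAddCommGroup Q] [InnerProductSpace ℝ Q] [CompleteSpace Q]
    (a : H →ₗ[ℝ] H →ₗ[ℝ] ℝ) (b : H →ₗ[ℝ] Q →ₗ[ℝ] ℝ)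
    (Ca : ℝ) (hCa : 0 < Ca)
    (ha : ∀ ξ τ : H, a ξ τ = a τ ξ)
    (hbound : ∀ ξ τ : H, |a ξ τ| ≤ Ca * ‖ξ‖ * ‖τ‖)
    (lam lamh : ℝ) (σ σh : H) (u uh : Q)
    (hu : ‖u‖ = 1) (huh : ‖uh‖ = 1)
    (h1 : ∀ τ : H, a σ τ + b τ u = 0)
    (h2 : ∀ v : Q, b σ v = -lam * ⟪u, v⟫)
    (h1h : a σh σh + b σh uh = 0)
    (h2h : ∀ v : Q, b σh v = -lamh * ⟪uh, v⟫) :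
    |lam - lamh| ≤ Ca * ‖σ - σh‖ ^ 2 + |lamh| * ‖u - uh‖ ^ 2 := by
  have hiu : ⟪u, u⟫ = 1 := by
    have := real_inner_self_eq_norm_sq u
    rw [hu] at this; simpa using this
  have hiuh : ⟪uh, uh⟫ = 1 := by
    have := real_inner_self_eq_norm_sq uh
    rw [huh] at this; simpa using this
  -- λ = a σ σ
  have hlam : a σ σ = lam := by
    have := h1 σ
    rw [h2 u, hiu] at this; linarith
  -- λ_h = a σ_h σ_h
  have hlamh : a σh σh = lamh := by
    have := h1h
    rw [h2h uh, hiuh] at this; linarith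
  -- cross term
  have hcross : a σ σh = lamh * ⟪uh, u⟫ := by
    have := h1 σh
    rw [h2h u] at this; linarith
  have hnormsq : ‖u - uh‖ ^ 2 = 2 - 2 * ⟪uh, u⟫ := by
    rw [@norm_sub_sq_real, hu, huh, real_inner_comm]; ring
  have hexp : a (σ - σh) (σ - σh) = lam - 2 * lamh * ⟪uh, u⟫ + lamh := by
    have hsym : a σh σ = a σ σh := ha σh σ
    simp only [map_sub, LinearMap.sub_apply]
    rw [hlam, hlamh, hcross, hsym, hcross]; ring
  have hkey : lam - lamh = a (σ - σh) (σ - σh) - lamh * ‖u - uh‖ ^ 2 := by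
    rw [hexp, hnormsq]; ring
  have hb := hbound (σ - σh) (σ - σh)
  calc |lam - lamh| = |a (σ - σh) (σ - σh) - lamh * ‖u - uh‖ ^ 2| := by rw [hkey]
    _ ≤ |a (σ - σh) (σ - σh)| + |lamh * ‖u - uh‖ ^ 2| := abs_sub _ _
    _ ≤ Ca * ‖σ - σh‖ ^ 2 + |lamh| * ‖u - uh‖ ^ 2 := by
        rw [abs_mul, abs_of_nonneg (by positivity : (0:ℝ) ≤ ‖u - uh‖ ^ 2)]
        have : Ca * ‖σ - σh‖ * ‖σ - σh‖ = Ca * ‖σ - σh‖ ^ 2 := by ring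
        linarith [hb, this ▸ hb]
end

section
/- Let H and Q be real Hilbert spaces, C_a, α, β > 0, a : H × H → ℝ bilinear with |a(ξ,τ)| ≤ C_a‖ξ‖_H‖τ‖_H for all ξ, τ, and b : H × Q → ℝ bilinear. Let H_h ⊆ H and Q_h ⊆ Q be closed subspaces and set V_h := {τ_h ∈ H_h : b(τ_h, v_h) = 0 for all v_h ∈ Q_h}; assume a(τ_h,τ_h) ≥ α‖τ_h‖_H² for all τ_h ∈ V_h; assume the compatibility condition that b(τ_h, w) = 0 whenever τ_h ∈ H_h and w ∈ Q is orthogonal to Q_h; and assume the discrete inf-sup condition that for every v_h ∈ Q_h the sup over nonzero τ_h ∈ H_h of b(τ_h,v_h)/‖τ_h‖_H is at least β‖v_h‖_Q. Let f ∈ Q, let (σ,u) ∈ H × Q satisfy a(σ,τ) + b(τ,u) = 0 for all τ ∈ H and b(σ,v) = −⟨f,v⟩ for all v ∈ Q, and let (σ_h,u_h) ∈ H_h × Q_h satisfy a(σ_h,τ_h) + b(τ_h,u_h) = 0 for all τ_h ∈ H_h and b(σ_h,v_h) = −⟨f,v_h⟩ for all v_h ∈ Q_h. Let R : Q → Q denote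 the orthogonal projection onto Q_h. If π ∈ H_h satisfies b(σ − π, v_h) = 0 for all v_h ∈ Q_h, then ‖u − u_h‖_Q ≤ ‖u − Ru‖_Q + (C_a/β)(1 + C_a/α)‖σ − π‖_H. -/
open RealInnerProductSpace

/-- Abstract form of the velocity error estimate (the paper's Lemma 4.1):
`‖u − u_h‖ ≤ ‖u − Ru‖ + (C_a/β)(1 + C_a/α)‖σ − π‖`, where `R` is the orthogonal
projection onto `Q_h` and `π ∈ H_h` is a `b`-compatible interpolant of `σ`. -/
theorem velocity_error_estimate
    {H Q : Type*} [NormedAddCommGroup H] [InnerProductSpace ℝ H] [CompleteSpace H]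
    [NormedAddCommGroup Q] [InnerProductSpace ℝ Q] [CompleteSpace Q]
    (Ca α β : ℝ) (hCa : 0 < Ca) (hα : 0 < α) (hβ : 0 < β)
    (a : H →ₗ[ℝ] H →ₗ[ℝ] ℝ) (b : H →ₗ[ℝ] Q →ₗ[ℝ] ℝ)
    (hbound : ∀ ξ τ : H, |a ξ τ| ≤ Ca * ‖ξ‖ * ‖τ‖)
    (Hh : Submodule ℝ H) (Qh : Submodule ℝ Q)
    (hHh : IsClosed (Hh : Set H)) (hQh : IsClosed (Qh : Set Q))
    (hcoer : ∀ τh : H, τh ∈ Hh → (∀ vh ∈ Qh, b τh vh = 0) → α * ‖τh‖ ^ 2 ≤ a τh τh)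
    (hcompat : ∀ τh : H, τh ∈ Hh → ∀ w : Q, w ∈ Qhᗮ → b τh w = 0)
    (hinfsup : ∀ vh ∈ Qh, β * ‖vh‖ ≤
      ⨆ τh : {τ : H // τ ∈ Hh ∧ τ ≠ 0}, b τh.1 vh / ‖τh.1‖)
    (f : Q) (σ : H) (u : Q) (σh : H) (uh : Q)
    (hσh : σh ∈ Hh) (huh : uh ∈ Qh)
    (h1 : ∀ τ : H, a σ τ + b τ u = 0)
    (h2 : ∀ v : Q, b σ v = -⟪f, v⟫)
    (h1h : ∀ τh ∈ Hh, a σh τh + b τh uh = 0)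
    (h2h : ∀ vh ∈ Qh, b σh vh = -⟪f, vh⟫)
    (R : Q →ₗ[ℝ] Q) (hRmem : ∀ w : Q, R w ∈ Qh) (hRorth : ∀ w : Q, w - R w ∈ Qhᗮ)
    (π : H) (hπ : π ∈ Hh) (hπb : ∀ vh ∈ Qh, b (σ - π) vh = 0) :
    ‖u - uh‖ ≤ ‖u - R u‖ + (Ca / β) * (1 + Ca / α) * ‖σ - π‖ := by

  set e := σh - π with he_def
  have he : e ∈ Hh := Hh.sub_mem hσh hπ
  -- b σ vh = b σh vh on Qh
  have hbσ : ∀ vh ∈ Qh, b σ vh = b σh vh := fun vh hvh => by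
    rw [h2 vh, h2h vh hvh]
  have hbe : ∀ vh ∈ Qh, b e vh = 0 := by
    intro vh hvh
    have h3 := hπb vh hvh
    have : b (σ - π) vh = b σ vh - b π vh := by simp [map_sub]
    have he2 : b e vh = b σh vh - b π vh := by simp [he_def, map_sub]
    rw [he2, ← hbσ vh hvh]
    linarith [h3, this]
  -- galerkin orthogonality type: a (σh - σ) τh = b τh u - b τh uh for τh ∈ Hh
  have hgal : ∀ τh ∈ Hh, a σh τh - a σ τh = b τh u - b τh uh := by
    intro τh hτh
    have := h1 τh
    have := h1h τh hτh
    linarith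
  -- a (σh - σ) e = 0
  have hae : a σh e - a σ e = 0 := by
    have h4 : b e u - b e uh = b e (u - R u) + b e (R u - uh) := by
      simp only [map_sub]; ring
    rw [hgal e he, h4, hcompat e he (u - R u) (hRorth u),
      hbe (R u - uh) (Qh.sub_mem (hRmem u) huh)]
    ring
  -- coercivity bound
  have hcoe : α * ‖e‖ ^ 2 ≤ a (σ - π) e := by
    have h5 := hcoer e he hbe
    have h6 : a e e = a (σ - π) e := by
      have hsplit : a e e = (a σh e - a σ e) + a (σ - π) e := by
        simp only [he_def, map_sub, LinearMap.sub_apply]; ring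
      rw [hsplit, hae]; ring
    linarith [h6 ▸ h5]
  have hub : a (σ - π) e ≤ Ca * ‖σ - π‖ * ‖e‖ := le_trans (le_abs_self _) (hbound _ _)
  have hekey : ‖e‖ ≤ Ca / α * ‖σ - π‖ := by
    rcases (norm_nonneg e).eq_or_lt with h | h
    · rw [← h]; positivity
    · rw [div_mul_eq_mul_div, le_div_iff₀ hα]
      nlinarith [hcoe, hub]
  -- σ error
  have hσerr : ‖σ - σh‖ ≤ (1 + Ca / α) * ‖σ - π‖ := by
    have : σ - σh = (σ - π) - e := by simp only [he_def]; abel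
    rw [this]
    calc ‖(σ - π) - e‖ ≤ ‖σ - π‖ + ‖e‖ := norm_sub_le _ _
      _ ≤ ‖σ - π‖ + Ca / α * ‖σ - π‖ := by linarith
      _ = (1 + Ca / α) * ‖σ - π‖ := by ring
  -- inf-sup bound on ‖R u - uh‖
  have hRuh : β * ‖R u - uh‖ ≤ Ca * ‖σ - σh‖ := by
    refine le_trans (hinfsup (R u - uh) (Qh.sub_mem (hRmem u) huh)) ?_
    refine Real.iSup_le (fun τh => ?_) (by positivity)
    obtain ⟨τ, hτH, hτ0⟩ := τh
    have hτpos : (0:ℝ) < ‖τ‖ := norm_pos_iff.mpr hτ0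
    rw [div_le_iff₀ hτpos]
    have h0 : b τ (u - R u) = 0 := hcompat τ hτH (u - R u) (hRorth u)
    have hb1 : b τ (R u - uh) = b τ u - b τ uh := by
      simp only [map_sub] at h0 ⊢; linarith
    have hb2 : b τ u - b τ uh = a σh τ - a σ τ := (hgal τ hτH).symm
    have hb3 : a σh τ - a σ τ = a (σh - σ) τ := by simp [map_sub]
    have hb4 : |a (σh - σ) τ| ≤ Ca * ‖σ - σh‖ * ‖τ‖ := by
      rw [show ‖σ - σh‖ = ‖σh - σ‖ from norm_sub_rev _ _]
      exact hbound _ _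
    calc b τ (R u - uh) = a (σh - σ) τ := by rw [hb1, hb2, hb3]
      _ ≤ Ca * ‖σ - σh‖ * ‖τ‖ := le_trans (le_abs_self _) hb4
  -- combine
  have hfinal : ‖R u - uh‖ ≤ (Ca / β) * (1 + Ca / α) * ‖σ - π‖ := by
    rw [show (Ca / β) * (1 + Ca / α) * ‖σ - π‖ = (Ca * ((1 + Ca / α) * ‖σ - π‖)) / β by ring,
      le_div_iff₀ hβ]
    have : Ca * ‖σ - σh‖ ≤ Ca * ((1 + Ca / α) * ‖σ - π‖) :=
      mul_le_mul_of_nonneg_left hσerr hCa.le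
    linarith
  calc ‖u - uh‖ = ‖(u - R u) + (R u - uh)‖ := by abel_nf
    _ ≤ ‖u - R u‖ + ‖R u - uh‖ := norm_add_le _ _
    _ ≤ ‖u - R u‖ + (Ca / β) * (1 + Ca / α) * ‖σ - π‖ := by linarith
end

section
/- Let H and Q be real Hilbert spaces, a : H × H → ℝ and b : H × Q → ℝ bilinear forms, and β > 0 such that the global inf-sup condition holds: for all (τ,v) ∈ H × Q, β(‖τ‖_H + ‖v‖_Q) ≤ sup over nonzero (ξ,w) ∈ H × Q of [a(τ,ξ) + b(ξ,v) + b(τ,w)]/(‖ξ‖_H + ‖w‖_Q). Let λ, λ_h ∈ ℝ, σ, σ_h ∈ H and u, u_h ∈ Q with ‖u_h‖_Q = 1 satisfy: a(σ,τ) + b(τ,u) = 0 for all τ ∈ H; b(σ,v) = −λ⟨u,v⟩ for all v ∈ Q; and b(σ_h,v) = −λ_h⟨u_h,v⟩ for all v ∈ Q. Then for every w₀ ∈ Q, ‖σ − σ_h‖_H + ‖u − u_h‖_Q ≤ (1/β)[ S + |λ_h − λ| + |λ|(‖u − w₀‖_Q + ‖w₀ − u_h‖_Q) ], where S denotes the sup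 over nonzero τ ∈ H of (−a(σ_h,τ) − b(τ,u_h))/‖τ‖_H. -/
/-!
Subtracting the discrete equation from the continuous ones, the error `(σ - σ_h, u - u_h)` solves
the mixed system whose right-hand sides are the residual functional `-a(σ_h, ·) - b(·, u_h)` and
`⟨λ_h u_h - λ u, ·⟩`. The inf-sup condition bounds the error by the dual norms of these two
functionals, and `‖λ_h u_h - λ u‖ ≤ |λ_h - λ| + |λ| ‖u - u_h‖` because `‖u_h‖ = 1`.
-/

open RealInnerProductSpace

section DualRatio

variable {H Q : Type*} [NormedAddCommGroup H] [NormedAddCommGroup Q]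

theorem Prod.norm_fst_add_norm_snd_pos {p : H × Q} (hp : p ≠ 0) : 0 < ‖p.1‖ + ‖p.2‖ :=
  (norm_pos_iff.mpr hp).trans_le <|
    (Prod.norm_def p).trans_le (max_le_add_of_nonneg (norm_nonneg _) (norm_nonneg _))

variable [Module ℝ H]

theorem LinearMap.iSup_div_norm_nonneg (f : H →ₗ[ℝ] ℝ) :
    0 ≤ ⨆ τ : {τ : H // τ ≠ 0}, f τ.1 / ‖τ.1‖ := by
  by_cases hB : BddAbove (Set.range fun τ : {τ : H // τ ≠ 0} => f τ.1 / ‖τ.1‖)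
  · rcases isEmpty_or_nonempty {τ : H // τ ≠ 0} with hH | ⟨τ, hτ⟩
    · rw [Real.iSup_of_isEmpty]
    · have hτ_le := le_ciSup hB ⟨τ, hτ⟩
      have hneg_le := le_ciSup hB ⟨-τ, neg_ne_zero.mpr hτ⟩
      simp only [map_neg, norm_neg, neg_div] at hneg_le
      linarith
  · rw [Real.iSup_of_not_bddAbove hB]

theorem LinearMap.le_iSup_div_norm_mul_norm (f : H →ₗ[ℝ] ℝ)
    (hB : BddAbove (Set.range fun τ : {τ : H // τ ≠ 0} => f τ.1 / ‖τ.1‖)) (τ : H) :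
    f τ ≤ (⨆ τ : {τ : H // τ ≠ 0}, f τ.1 / ‖τ.1‖) * ‖τ‖ := by
  rcases eq_or_ne τ 0 with rfl | hτ
  · simp
  · rw [← div_le_iff₀ (norm_pos_iff.mpr hτ)]
    exact le_ciSup hB ⟨τ, hτ⟩

variable [InnerProductSpace ℝ Q]

theorem iSup_add_inner_div_norm_add_norm_le (f : H →ₗ[ℝ] ℝ) (z : Q) :
    (⨆ p : {p : H × Q // p ≠ 0}, (f p.1.1 + ⟪z, p.1.2⟫) / (‖p.1.1‖ + ‖p.1.2‖)) ≤
      (⨆ τ : {τ : H // τ ≠ 0}, f τ.1 / ‖τ.1‖) + ‖z‖ := by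
  set S := ⨆ τ : {τ : H // τ ≠ 0}, f τ.1 / ‖τ.1‖
  have hS : 0 ≤ S := f.iSup_div_norm_nonneg
  by_cases hB : BddAbove (Set.range fun τ : {τ : H // τ ≠ 0} => f τ.1 / ‖τ.1‖)
  · refine Real.iSup_le (fun ⟨⟨ξ, w⟩, hp⟩ => ?_) (by positivity)
    rw [div_le_iff₀ (Prod.norm_fst_add_norm_snd_pos hp)]
    have hf := f.le_iSup_div_norm_mul_norm hB ξ
    have hz := real_inner_le_norm z w
    nlinarith [norm_nonneg ξ, norm_nonneg w, norm_nonneg z]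
  · -- The junk value `0` of the unbounded `f`-supremum is matched on the left: the pairs
    -- `(τ, 0)` make the supremum over pairs unbounded too.
    have hpair : ¬ BddAbove (Set.range fun p : {p : H × Q // p ≠ 0} =>
        (f p.1.1 + ⟪z, p.1.2⟫) / (‖p.1.1‖ + ‖p.1.2‖)) := by
      rintro ⟨M, hM⟩
      refine hB ⟨M, ?_⟩
      rintro _ ⟨⟨τ, hτ⟩, rfl⟩
      simpa using hM ⟨⟨⟨τ, 0⟩, by simpa using hτ⟩, rfl⟩
    rw [Real.iSup_of_not_bddAbove hpair]
    positivity

end DualRatio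

section MixedEigenproblem

variable {H Q : Type*} [AddCommGroup H] [Module ℝ H] [NormedAddCommGroup Q]
  [InnerProductSpace ℝ Q]

theorem mixed_error_eq (a : H →ₗ[ℝ] H →ₗ[ℝ] ℝ) (b : H →ₗ[ℝ] Q →ₗ[ℝ] ℝ) {lam lamh : ℝ}
    {σ σh : H} {u uh : Q} (h1 : ∀ τ : H, a σ τ + b τ u = 0)
    (h2 : ∀ v : Q, b σ v = -lam * ⟪u, v⟫) (h2h : ∀ v : Q, b σh v = -lamh * ⟪uh, v⟫)
    (ξ : H) (w : Q) :
    a (σ - σh) ξ + b ξ (u - uh) + b (σ - σh) w =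
      (-(a σh) - b.flip uh) ξ + ⟪lamh • uh - lam • u, w⟫ := by
  simp only [map_sub, LinearMap.sub_apply, LinearMap.neg_apply, LinearMap.flip_apply,
    inner_sub_left, real_inner_smul_left]
  linear_combination h1 ξ + h2 w - h2h w

theorem norm_smul_sub_smul_le_of_norm_eq_one (lam lamh : ℝ) (u : Q) {uh : Q} (huh : ‖uh‖ = 1)
    (w₀ : Q) : ‖lamh • uh - lam • u‖ ≤ |lamh - lam| + |lam| * (‖u - w₀‖ + ‖w₀ - uh‖) := by
  have hsplit : lamh • uh - lam • u = (lamh - lam) • uh - lam • ((u - w₀) + (w₀ - uh)) := by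
    simp only [sub_smul, smul_add, smul_sub]
    abel
  rw [hsplit]
  refine (norm_sub_le _ _).trans (add_le_add ?_ ?_)
  · rw [norm_smul, huh, mul_one, Real.norm_eq_abs]
  · rw [norm_smul, Real.norm_eq_abs]
    exact mul_le_mul_of_nonneg_left (norm_add_le _ _) (abs_nonneg lam)

end MixedEigenproblem

theorem reliability_bound_general
    {H Q : Type*} [NormedAddCommGroup H] [InnerProductSpace ℝ H]
    [NormedAddCommGroup Q] [InnerProductSpace ℝ Q]
    (a : H →ₗ[ℝ] H →ₗ[ℝ] ℝ) (b : H →ₗ[ℝ] Q →ₗ[ℝ] ℝ) (β : ℝ) (hβ : 0 < β)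
    (hinfsup : ∀ (τ : H) (v : Q), β * (‖τ‖ + ‖v‖) ≤
      ⨆ ξw : {p : H × Q // p ≠ 0},
        (a τ ξw.1.1 + b ξw.1.1 v + b τ ξw.1.2) / (‖ξw.1.1‖ + ‖ξw.1.2‖))
    (lam lamh : ℝ) (σ σh : H) (u uh : Q) (huh : ‖uh‖ = 1)
    (h1 : ∀ τ : H, a σ τ + b τ u = 0)
    (h2 : ∀ v : Q, b σ v = -lam * ⟪u, v⟫)
    (h2h : ∀ v : Q, b σh v = -lamh * ⟪uh, v⟫) :
    ∀ w₀ : Q, ‖σ - σh‖ + ‖u - uh‖ ≤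
      (1 / β) * ((⨆ τ : {τ : H // τ ≠ 0}, (-(a σh τ.1) - b τ.1 uh) / ‖τ.1‖) +
        |lamh - lam| + |lam| * (‖u - w₀‖ + ‖w₀ - uh‖)) := by
  intro w₀
  have hinfsup_err := hinfsup (σ - σh) (u - uh)
  simp only [mixed_error_eq a b h1 h2 h2h] at hinfsup_err
  have hsplit := hinfsup_err.trans
    (iSup_add_inner_div_norm_add_norm_le (-(a σh) - b.flip uh) (lamh • uh - lam • u))
  simp only [LinearMap.sub_apply, LinearMap.neg_apply, LinearMap.flip_apply] at hsplit
  have hz := norm_smul_sub_smul_le_of_norm_eq_one lam lamh u huh w₀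
  rw [one_div_mul_eq_div, le_div_iff₀' hβ]
  linarith

/-- Abstract form of the paper's reliability lemma (Lemma 5.4): under the global inf-sup
condition, the total error `‖σ − σ_h‖ + ‖u − u_h‖` is bounded by the residual supremum
`S`, the eigenvalue error `|λ_h − λ|`, and `|λ|(‖u − w₀‖ + ‖w₀ − u_h‖)` for any `w₀`. -/
theorem reliability_bound
    {H Q : Type*} [NormedAddCommGroup H] [InnerProductSpace ℝ H] [CompleteSpace H]
    [NormedAddCommGroup Q] [InnerProductSpace ℝ Q] [CompleteSpace Q]
    (a : H →ₗ[ℝ] H →ₗ[ℝ] ℝ) (b : H →ₗ[ℝ] Q →ₗ[ℝ] ℝ) (β : ℝ) (hβ : 0 < β)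
    (hinfsup : ∀ (τ : H) (v : Q), β * (‖τ‖ + ‖v‖) ≤
      ⨆ ξw : {p : H × Q // p ≠ 0},
        (a τ ξw.1.1 + b ξw.1.1 v + b τ ξw.1.2) / (‖ξw.1.1‖ + ‖ξw.1.2‖))
    (lam lamh : ℝ) (σ σh : H) (u uh : Q) (huh : ‖uh‖ = 1)
    (h1 : ∀ τ : H, a σ τ + b τ u = 0)
    (h2 : ∀ v : Q, b σ v = -lam * ⟪u, v⟫)
    (h2h : ∀ v : Q, b σh v = -lamh * ⟪uh, v⟫) :
    ∀ w₀ : Q, ‖σ - σh‖ + ‖u - uh‖ ≤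
      (1 / β) * ((⨆ τ : {τ : H // τ ≠ 0}, (-(a σh τ.1) - b τ.1 uh) / ‖τ.1‖) +
        |lamh - lam| + |lam| * (‖u - w₀‖ + ‖w₀ - uh‖)) :=
  reliability_bound_general a b β hβ hinfsup lam lamh σ σh u uh huh h1 h2 h2h
end
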